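/- arXiv:2202.08656 — 3 statements merged into one kernel-verified Lean document; each statement's English description precedes it below -/
import Mathlib

section
/- The Lipschitz-robustified mean equals the plain weighted mean when inputs are bounded and total voting rights are large enough: if all scores lie in [−Δ, Δ] and ‖w‖₁ ≥ 8Δ/L, then BrMean_L(w, x) = Mean(w, x). -/
/-- Objective of the quadratically regularized median with parameter `L`. -/
noncomputable def qrObj (L : ℝ) {N : ℕ} (w x : Fin N → ℝ) (z : ℝ) : ℝ :=
  z ^ 2 / (2 * L) + ∑ n, w n * |z - x n|

/-- Clipping of `x` to the interval `[μ - r, μ + r]`. -/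
def clip (x μ r : ℝ) : ℝ := max (μ - r) (min (μ + r) x)

/-- The clipped mean. -/
noncomputable def clMean {N : ℕ} (w x : Fin N → ℝ) (μ r : ℝ) : ℝ :=
  (∑ n, w n * clip (x n) μ r) / ∑ n, w n

/-- If all scores lie in `[-Δ, Δ]` and the total voting rights are at least
`8 Δ / L`, then the Lipschitz-robustified mean
`BrMean_L(w, x) = ClMean(w, x | QrMed_{L/4}(w, x), L ‖w‖₁ / 4)`
equals the plain weighted mean. -/
theorem brMean_eq_mean (L : ℝ) (hL : 0 < L) {N : ℕ}
    (w x : Fin N → ℝ) (hw : ∀ n, 0 ≤ w n) (hpos : 0 < ∑ n, w n)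
    (Δ : ℝ) (hΔ : 0 < Δ) (hx : ∀ n, |x n| ≤ Δ)
    (hbig : 8 * Δ / L ≤ ∑ n, w n)
    (q : ℝ) (hq : ∀ z : ℝ, qrObj (L / 4) w x q ≤ qrObj (L / 4) w x z) :
    clMean w x q (L * (∑ n, w n) / 4) = (∑ n, w n * x n) / ∑ n, w n := by
  set r := L * (∑ n, w n) / 4 with hr_def
  have hr : 2 * Δ ≤ r := by
    have h1 : L * (8 * Δ / L) ≤ L * (∑ n, w n) :=
      mul_le_mul_of_nonneg_left hbig hL.le
    have h2 : L * (8 * Δ / L) = 8 * Δ := by field_simp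
    rw [hr_def]; linarith
  have hqΔ : |q| ≤ Δ := by
    by_contra h
    push_neg at h
    rcases lt_abs.mp h with h1 | h1
    · have := hq Δ
      unfold qrObj at this
      have hsum : ∑ n, w n * |Δ - x n| ≤ ∑ n, w n * |q - x n| := by
        apply Finset.sum_le_sum
        intro n _
        apply mul_le_mul_of_nonneg_left _ (hw n)
        have hxn := (abs_le.mp (hx n)).2
        calc |Δ - x n| = Δ - x n := abs_of_nonneg (by linarith)
          _ ≤ q - x n := by linarith
          _ ≤ |q - x n| := le_abs_self _
      have hden : (0:ℝ) < 2 * (L / 4) := by linarith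
      have hsq : Δ ^ 2 / (2 * (L / 4)) < q ^ 2 / (2 * (L / 4)) := by
        rw [div_lt_div_iff_of_pos_right hden]; nlinarith
      linarith
    · have := hq (-Δ)
      unfold qrObj at this
      have hsum : ∑ n, w n * |-Δ - x n| ≤ ∑ n, w n * |q - x n| := by
        apply Finset.sum_le_sum
        intro n _
        apply mul_le_mul_of_nonneg_left _ (hw n)
        have hxn := (abs_le.mp (hx n)).1
        calc |-Δ - x n| = -(-Δ - x n) := abs_of_nonpos (by linarith)
          _ ≤ -(q - x n) := by linarith
          _ ≤ |q - x n| := neg_le_abs _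
      have hsq : (-Δ) ^ 2 / (2 * (L / 4)) < q ^ 2 / (2 * (L / 4)) := by
        have hden : (0:ℝ) < 2 * (L / 4) := by linarith
        rw [div_lt_div_iff_of_pos_right hden]; nlinarith
      linarith
  have hclip : ∀ n, clip (x n) q r = x n := by
    intro n
    have h1 := (abs_le.mp (hx n)).1
    have h2 := (abs_le.mp (hx n)).2
    have hq1 := (abs_le.mp hqΔ).1
    have hq2 := (abs_le.mp hqΔ).2
    unfold clip
    rw [min_eq_right (by linarith), max_eq_right (by linarith)]
  unfold clMean
  simp_rw [hclip]
end

section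
/- The Lipschitz-robustified mean is L-Lipschitz resilient with respect to removal of a subset of voters: if w_{−F} denotes the weights with those of voters in F set to zero, then |BrMean_L(w_{−F}, x) − BrMean_L(w, x)| ≤ L · Σ_{f ∈ F} w_f. -/
open Finset

lemma clip_mem (x μ r : ℝ) (hr : 0 ≤ r) :
    μ - r ≤ clip x μ r ∧ clip x μ r ≤ μ + r :=
  ⟨le_max_left _ _, max_le (by linarith) (min_le_left _ _)⟩

lemma clip_lip (x μ r μ' r' : ℝ) :
    |clip x μ' r' - clip x μ r| ≤ |μ' - μ| + |r' - r| := by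
  have h1 : |clip x μ' r' - clip x μ r| ≤
      max |μ' - r' - (μ - r)| |min (μ' + r') x - min (μ + r) x| :=
    abs_max_sub_max_le_max _ _ _ _
  have h2 : |min (μ' + r') x - min (μ + r) x| ≤ max |μ' + r' - (μ + r)| |x - x| :=
    abs_min_sub_min_le_max _ _ _ _
  have h3 : |μ' - r' - (μ - r)| ≤ |μ' - μ| + |r' - r| := by
    have e : μ' - r' - (μ - r) = (μ' - μ) - (r' - r) := by ring
    rw [e]; exact abs_sub _ _
  have h4 : |μ' + r' - (μ + r)| ≤ |μ' - μ| + |r' - r| := by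
    have e : μ' + r' - (μ + r) = (μ' - μ) + (r' - r) := by ring
    rw [e]; exact abs_add_le _ _
  have h5 : |x - x| ≤ |μ' - μ| + |r' - r| := by
    simp only [sub_self, abs_zero]; positivity
  exact h1.trans (max_le h3 (h2.trans (max_le h4 h5)))

lemma limit_aux (c D : ℝ) (_hc : 0 ≤ c) (hD : 0 ≤ D)
    (h : ∀ t : ℝ, 0 < t → t < 1 → (1 - t) * c ≤ D) : c ≤ D := by
  by_contra hcon
  push_neg at hcon
  have hcpos : 0 < c := lt_of_le_of_lt hD hcon
  have ht0 : (0:ℝ) < (c - D) / (2 * c) := div_pos (by linarith) (by positivity)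
  have ht1 : (c - D) / (2 * c) < 1 := by
    rw [div_lt_one (by positivity)]; linarith
  have := h _ ht0 ht1
  have e : (1 - (c - D) / (2 * c)) * c = c - (c - D) / 2 := by
    field_simp
  rw [e] at this
  linarith

lemma qr_min_strong (L0 : ℝ) (hL0 : 0 < L0) {N : ℕ} (w x : Fin N → ℝ)
    (hw : ∀ n, 0 ≤ w n) (q : ℝ)
    (hq : ∀ z, qrObj L0 w x q ≤ qrObj L0 w x z) (z : ℝ) :
    qrObj L0 w x q + (z - q) ^ 2 / (2 * L0) ≤ qrObj L0 w x z := by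
  have hcnn : (0:ℝ) ≤ (z - q) ^ 2 / (2 * L0) := by positivity
  have key : ∀ t : ℝ, 0 < t → t < 1 →
      (1 - t) * ((z - q) ^ 2 / (2 * L0)) ≤ qrObj L0 w x z - qrObj L0 w x q := by
    intro t ht ht1
    have h1 := hq (q + t * (z - q))
    have hsum : ∑ n, w n * |q + t * (z - q) - x n| ≤
        t * ∑ n, w n * |z - x n| + (1 - t) * ∑ n, w n * |q - x n| := by
      rw [Finset.mul_sum, Finset.mul_sum, ← Finset.sum_add_distrib]
      refine Finset.sum_le_sum fun n _ => ?_
      have habs : |q + t * (z - q) - x n| ≤ t * |z - x n| + (1 - t) * |q - x n| := by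
        have e : q + t * (z - q) - x n = t * (z - x n) + (1 - t) * (q - x n) := by ring
        rw [e]
        calc |t * (z - x n) + (1 - t) * (q - x n)|
            ≤ |t * (z - x n)| + |(1 - t) * (q - x n)| := abs_add_le _ _
          _ = t * |z - x n| + (1 - t) * |q - x n| := by
              rw [abs_mul, abs_mul, abs_of_pos ht, abs_of_pos (show (0:ℝ) < 1 - t by linarith)]
      nlinarith [hw n, habs, abs_nonneg (z - x n), abs_nonneg (q - x n)]
    have hquad : (q + t * (z - q)) ^ 2 / (2 * L0) =
        t * (z ^ 2 / (2 * L0)) + (1 - t) * (q ^ 2 / (2 * L0)) -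
          t * ((1 - t) * ((z - q) ^ 2 / (2 * L0))) := by
      field_simp; ring
    have hconv : qrObj L0 w x (q + t * (z - q)) ≤
        t * qrObj L0 w x z + (1 - t) * qrObj L0 w x q -
          t * ((1 - t) * ((z - q) ^ 2 / (2 * L0))) := by
      unfold qrObj; rw [hquad]; linarith
    have h2 : t * ((1 - t) * ((z - q) ^ 2 / (2 * L0))) ≤
        t * (qrObj L0 w x z - qrObj L0 w x q) := by nlinarith [h1, hconv]
    exact le_of_mul_le_mul_left h2 ht
  have := limit_aux _ _ hcnn (sub_nonneg.mpr (hq z)) key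
  linarith

lemma avg_mem {N : ℕ} (w c : Fin N → ℝ) (hw : ∀ n, 0 ≤ w n)
    (hW : 0 < ∑ n, w n) (lo hi : ℝ) (h : ∀ n, lo ≤ c n ∧ c n ≤ hi) :
    lo ≤ (∑ n, w n * c n) / (∑ n, w n) ∧ (∑ n, w n * c n) / (∑ n, w n) ≤ hi := by
  constructor
  · rw [le_div_iff₀ hW]
    calc lo * ∑ n, w n = ∑ n, w n * lo := by rw [← Finset.sum_mul]; ring
      _ ≤ ∑ n, w n * c n :=
        Finset.sum_le_sum fun n _ => mul_le_mul_of_nonneg_left (h n).1 (hw n)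
  · rw [div_le_iff₀ hW]
    calc (∑ n, w n * c n) ≤ ∑ n, w n * hi :=
        Finset.sum_le_sum fun n _ => mul_le_mul_of_nonneg_left (h n).2 (hw n)
      _ = hi * ∑ n, w n := by rw [← Finset.sum_mul]; ring

set_option maxHeartbeats 1000000 in
/-- BrMean is L-Lipschitz resilient with respect to the removal of a subset F
of the voters: writing `wF` for the weights with those of voters in `F` zeroed
out, and `q`, `qF` for the corresponding quadratically regularized medians
(with parameter `L/4`), we have
`|BrMean_L(wF, x) − BrMean_L(w, x)| ≤ L · Σ_{f ∈ F} w f`. -/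
theorem brMean_resilient (L : ℝ) (hL : 0 < L) {N : ℕ}
    (w x : Fin N → ℝ) (hw : ∀ n, 0 ≤ w n) (F : Finset (Fin N))
    (hpos : 0 < ∑ n ∈ univ \ F, w n)
    (wF : Fin N → ℝ) (hwF : ∀ n, wF n = if n ∈ F then 0 else w n)
    (q qF : ℝ)
    (hq : ∀ z : ℝ, qrObj (L / 4) w x q ≤ qrObj (L / 4) w x z)
    (hqF : ∀ z : ℝ, qrObj (L / 4) wF x qF ≤ qrObj (L / 4) wF x z) :
    |clMean wF x qF (L * (∑ n, wF n) / 4) -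
      clMean w x q (L * (∑ n, w n) / 4)| ≤ L * ∑ f ∈ F, w f := by
  have hwFnn : ∀ n, 0 ≤ wF n := by
    intro n; rw [hwF]; split
    · exact le_refl 0
    · exact hw n
  set S := ∑ f ∈ F, w f with hSdef
  set W := ∑ n, w n with hWdef
  set WF := ∑ n, wF n with hWFdef
  have hSnn : 0 ≤ S := Finset.sum_nonneg fun n _ => hw n
  have hsum : ∀ g : Fin N → ℝ,
      ∑ n, w n * g n = (∑ n, wF n * g n) + ∑ n ∈ F, w n * g n := by
    intro g
    have h1 := Finset.sum_sdiff (f := fun n => w n * g n) (Finset.subset_univ F)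
    have h2 := Finset.sum_sdiff (f := fun n => wF n * g n) (Finset.subset_univ F)
    have h3 : ∑ n ∈ univ \ F, wF n * g n = ∑ n ∈ univ \ F, w n * g n :=
      Finset.sum_congr rfl fun n hn => by
        rw [hwF]; simp [(Finset.mem_sdiff.mp hn).2]
    have h4 : ∑ n ∈ F, wF n * g n = 0 :=
      Finset.sum_eq_zero fun n hn => by rw [hwF]; simp [hn]
    linarith
  have hWsplit : W = WF + S := by
    have := hsum fun _ => 1
    simpa using this
  have hWFpos : 0 < WF := by
    have h2 := Finset.sum_sdiff (f := fun n => wF n) (Finset.subset_univ F)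
    have h3 : ∑ n ∈ univ \ F, wF n = ∑ n ∈ univ \ F, w n :=
      Finset.sum_congr rfl fun n hn => by
        rw [hwF]; simp [(Finset.mem_sdiff.mp hn).2]
    have h4 : ∑ n ∈ F, wF n = 0 :=
      Finset.sum_eq_zero fun n hn => by rw [hwF]; simp [hn]
    rw [hWFdef, ← h2, h3, h4]
    simpa using hpos
  have hWpos : 0 < W := by linarith
  -- Step 1: stability of the regularized median
  have hL4 : (0:ℝ) < L / 4 := by linarith
  have hobj : ∀ z : ℝ, qrObj (L / 4) w x z =
      qrObj (L / 4) wF x z + ∑ n ∈ F, w n * |z - x n| := by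
    intro z
    have := hsum fun n => |z - x n|
    simp only [qrObj]
    linarith
  have hPlip : ∀ a b : ℝ,
      (∑ n ∈ F, w n * |a - x n|) - (∑ n ∈ F, w n * |b - x n|) ≤ S * |a - b| := by
    intro a b
    rw [← Finset.sum_sub_distrib, hSdef, Finset.sum_mul]
    refine Finset.sum_le_sum fun n _ => ?_
    have h := abs_sub_abs_le_abs_sub (a - x n) (b - x n)
    have h' : |a - x n - (b - x n)| = |a - b| := by ring_nf
    rw [h'] at h
    nlinarith [hw n]
  have hqq : |q - qF| ≤ L / 4 * S := by
    have hs1 := qr_min_strong (L / 4) hL4 w x hw q hq qF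
    have hs2 := qr_min_strong (L / 4) hL4 wF x hwFnn qF hqF q
    have e1 := hobj q
    have e2 := hobj qF
    have hP := hPlip qF q
    have hP' : S * |qF - q| = S * |q - qF| := by rw [abs_sub_comm]
    have hee : (qF - q) ^ 2 = (q - qF) ^ 2 := by ring
    have hsq : (qF - q) ^ 2 / (2 * (L / 4)) + (q - qF) ^ 2 / (2 * (L / 4)) ≤
        S * |q - qF| := by
      linarith [hs1, hs2, e1, e2, hP, hP']
    have hdiv : (qF - q) ^ 2 / (2 * (L / 4)) + (q - qF) ^ 2 / (2 * (L / 4)) =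
        (q - qF) ^ 2 / (L / 4) := by
      rw [hee]; field_simp; ring
    rw [hdiv] at hsq
    have hd2 : (q - qF) ^ 2 ≤ S * |q - qF| * (L / 4) := (div_le_iff₀ hL4).mp hsq
    have h2 : |q - qF| * |q - qF| ≤ (L / 4 * S) * |q - qF| := by
      nlinarith [hd2, abs_mul_abs_self (q - qF)]
    rcases eq_or_lt_of_le (abs_nonneg (q - qF)) with h0 | h0
    · rw [← h0]; positivity
    · exact le_of_mul_le_mul_right h2 h0
  -- Step 2: clipped means
  set r := L * W / 4 with hrdef
  set rF := L * WF / 4 with hrFdef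
  have hr : 0 ≤ r := by positivity
  have hrF : 0 ≤ rF := by positivity
  have hrr : |rF - r| = L / 4 * S := by
    have e : rF - r = -(L / 4 * S) := by rw [hrFdef, hrdef, hWsplit]; ring
    rw [e, abs_neg, abs_of_nonneg (by positivity)]
  set c : Fin N → ℝ := fun n => clip (x n) qF rF with hcdef
  set c' : Fin N → ℝ := fun n => clip (x n) q r with hc'def
  set A1 := (∑ n, wF n * c n) / WF with hA1def
  set B1 := (∑ n, w n * c n) / W with hB1def
  set B := (∑ n, w n * c' n) / W with hBdef
  have hcmem : ∀ n, qF - rF ≤ c n ∧ c n ≤ qF + rF := fun n => clip_mem (x n) qF rF hrF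
  have hA1mem : qF - rF ≤ A1 ∧ A1 ≤ qF + rF :=
    avg_mem wF c hwFnn hWFpos (qF - rF) (qF + rF) hcmem
  -- |B1 - A1| ≤ L * S / 2
  have hB1A1 : |B1 - A1| ≤ L * S / 2 := by
    have hsplitc := hsum c
    have hU : A1 * WF = ∑ n, wF n * c n := by
      rw [hA1def]; field_simp
    have hB1W : B1 * W = ∑ n, w n * c n := by
      rw [hB1def]; field_simp
    have e2 : (B1 - A1) * W = (∑ n ∈ F, w n * c n) - S * A1 := by
      linear_combination hB1W + hsplitc - hU - A1 * hWsplit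
    have hF : ∑ n ∈ F, w n * (c n - A1) = (∑ n ∈ F, w n * c n) - S * A1 := by
      rw [hSdef, Finset.sum_mul, ← Finset.sum_sub_distrib]
      exact Finset.sum_congr rfl fun n _ => by ring
    have e : B1 - A1 = (∑ n ∈ F, w n * (c n - A1)) / W := by
      rw [hF, eq_div_iff hWpos.ne']
      exact e2
    rw [e, abs_div, abs_of_pos hWpos, div_le_iff₀ hWpos]
    have hbound : |∑ n ∈ F, w n * (c n - A1)| ≤ 2 * rF * S := by
      calc |∑ n ∈ F, w n * (c n - A1)| ≤ ∑ n ∈ F, |w n * (c n - A1)| :=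
          Finset.abs_sum_le_sum_abs _ _
        _ ≤ ∑ n ∈ F, w n * (2 * rF) := by
            refine Finset.sum_le_sum fun n _ => ?_
            rw [abs_mul, abs_of_nonneg (hw n)]
            refine mul_le_mul_of_nonneg_left ?_ (hw n)
            rw [abs_le]
            constructor
            · linarith [(hcmem n).1, hA1mem.2]
            · linarith [(hcmem n).2, hA1mem.1]
        _ = 2 * rF * S := by rw [hSdef, ← Finset.sum_mul]; ring
    refine hbound.trans ?_
    rw [hrFdef, hWsplit]
    nlinarith [mul_nonneg (mul_nonneg hL.le hSnn) hSnn]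
  -- |B1 - B| ≤ |qF - q| + |rF - r|
  have hB1B : |B1 - B| ≤ |qF - q| + |rF - r| := by
    have e : B1 - B = (∑ n, w n * (c n - c' n)) / W := by
      rw [hB1def, hBdef, div_sub_div_same, ← Finset.sum_sub_distrib]
      congr 1
      exact Finset.sum_congr rfl fun n _ => by ring
    rw [e, abs_div, abs_of_pos hWpos, div_le_iff₀ hWpos]
    calc |∑ n, w n * (c n - c' n)| ≤ ∑ n, |w n * (c n - c' n)| :=
        Finset.abs_sum_le_sum_abs _ _
      _ ≤ ∑ n, w n * (|qF - q| + |rF - r|) := by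
          refine Finset.sum_le_sum fun n _ => ?_
          rw [abs_mul, abs_of_nonneg (hw n)]
          exact mul_le_mul_of_nonneg_left (clip_lip (x n) q r qF rF) (hw n)
      _ = (|qF - q| + |rF - r|) * W := by rw [hWdef, ← Finset.sum_mul]; ring
  -- conclude
  have hgoal1 : clMean wF x qF rF = A1 := by
    simp only [clMean, hA1def, hcdef, hWFdef]
  have hgoal2 : clMean w x q r = B := by
    simp only [clMean, hBdef, hc'def, hWdef]
  rw [hgoal1, hgoal2]
  have htri : |A1 - B| ≤ |B1 - A1| + |B1 - B| := by
    have e : A1 - B = -(B1 - A1) + (B1 - B) := by ring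
    rw [e]
    exact (abs_add_le _ _).trans (by rw [abs_neg])
  rw [abs_sub_comm q qF] at hqq
  calc |A1 - B| ≤ |B1 - A1| + |B1 - B| := htri
    _ ≤ L * S / 2 + (|qF - q| + |rF - r|) := by linarith
    _ ≤ L * S / 2 + (L / 4 * S + L / 4 * S) := by rw [hrr]; linarith
    _ = L * S := by ring
end

section
/- The Lipschitz-robustified mean is 2-Lipschitz (in ℓ∞) with respect to the input scores: for any perturbation ξ, |BrMean_L(w, x + ξ) − BrMean_L(w, x)| ≤ 2‖ξ‖∞. -/
lemma clip_lipschitz (y y' μ μ' r : ℝ) :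
    |clip y' μ' r - clip y μ r| ≤ |μ' - μ| + |y' - y| := by
  unfold clip
  have h1 : |max (μ' - r) (min (μ' + r) y') - max (μ - r) (min (μ + r) y')|
      ≤ |μ' - μ| := by
    refine le_trans (abs_max_sub_max_le_max _ _ _ _) ?_
    have h2 : |min (μ' + r) y' - min (μ + r) y'| ≤ |μ' - μ| := by
      refine le_trans (abs_min_sub_min_le_max _ _ _ _) ?_
      simp only [sub_self, abs_zero]
      apply max_le <;> [skip; positivity] <;>
        simp [abs_sub_le_iff] <;> constructor <;> linarith [abs_nonneg (μ' - μ)]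
    have h3 : |(μ' - r) - (μ - r)| = |μ' - μ| := by ring_nf
    apply max_le
    · exact le_of_eq h3
    · exact h2
  have h4 : |max (μ - r) (min (μ + r) y') - max (μ - r) (min (μ + r) y)|
      ≤ |y' - y| := by
    refine le_trans (abs_max_sub_max_le_max _ _ _ _) ?_
    apply max_le
    · simp [abs_nonneg]
    · exact le_trans (abs_min_sub_min_le_max _ _ _ _) (by simp [abs_nonneg])
  calc |max (μ' - r) (min (μ' + r) y') - max (μ - r) (min (μ + r) y)|
      ≤ |max (μ' - r) (min (μ' + r) y') - max (μ - r) (min (μ + r) y')| +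
        |max (μ - r) (min (μ + r) y') - max (μ - r) (min (μ + r) y)| :=
        abs_sub_le _ _ _
    _ ≤ |μ' - μ| + |y' - y| := add_le_add h1 h4

lemma key_abs (u v ξ B : ℝ) (hv : u + B ≤ v) (hξ : |ξ| ≤ B) :
    |u + B - ξ| + |v - B| ≤ |u| + |v - ξ| := by
  rw [abs_le] at hξ
  rcases abs_cases (u + B - ξ) with ⟨e1, _⟩ | ⟨e1, _⟩ <;>
  rcases abs_cases (v - B) with ⟨e2, _⟩ | ⟨e2, _⟩ <;>
  rcases abs_cases u with ⟨e3, _⟩ | ⟨e3, _⟩ <;>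
  rcases abs_cases (v - ξ) with ⟨e4, _⟩ | ⟨e4, _⟩ <;>
  rw [e1, e2, e3, e4] <;> linarith

/-- strong minimality : the minimizer of qrObj satisfies a quadratic growth bound. -/
lemma strong_min (lam : ℝ) (hlam : 0 < lam) {N : ℕ} (w x : Fin N → ℝ)
    (hw : ∀ n, 0 ≤ w n) (q : ℝ)
    (hq : ∀ z : ℝ, qrObj lam w x q ≤ qrObj lam w x z) (z : ℝ) :
    qrObj lam w x q + (z - q) ^ 2 / (4 * lam) ≤ qrObj lam w x z := by
  have hmid := hq ((q + z) / 2)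
  unfold qrObj at hmid ⊢
  have hsum : 2 * ∑ n, w n * |(q + z) / 2 - x n|
      ≤ (∑ n, w n * |q - x n|) + ∑ n, w n * |z - x n| := by
    rw [Finset.mul_sum, ← Finset.sum_add_distrib]
    apply Finset.sum_le_sum
    intro n _
    have habs : 2 * |(q + z) / 2 - x n| ≤ |q - x n| + |z - x n| := by
      have h := abs_add_le (q - x n) (z - x n)
      have he : |q - x n + (z - x n)| = 2 * |(q + z) / 2 - x n| := by
        rw [show q - x n + (z - x n) = 2 * ((q + z) / 2 - x n) by ring, abs_mul]
        norm_num
      linarith [he ▸ h]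
    nlinarith [hw n, habs]
  have hq2 : ((q + z) / 2) ^ 2 / (2 * lam)
      = q ^ 2 / (2 * lam) / 2 + z ^ 2 / (2 * lam) / 2 - (z - q) ^ 2 / (8 * lam) := by
    field_simp
    ring
  have hdd : (z - q) ^ 2 / (4 * lam) = 2 * ((z - q) ^ 2 / (8 * lam)) := by
    field_simp; ring
  linarith [hmid, hsum, hq2, hdd]

/-- one-sided shift bound for the minimizers. -/
lemma q_shift (L : ℝ) (hL : 0 < L) {N : ℕ} (w x ξ : Fin N → ℝ)
    (hw : ∀ n, 0 ≤ w n) (B : ℝ) (hB : ∀ n, |ξ n| ≤ B) (hB0 : 0 ≤ B)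
    (q q' : ℝ)
    (hq : ∀ z : ℝ, qrObj (L / 4) w x q ≤ qrObj (L / 4) w x z)
    (hq' : ∀ z : ℝ, qrObj (L / 4) w (x + ξ) q' ≤ qrObj (L / 4) w (x + ξ) z) :
    q' ≤ q + B := by
  by_contra hcon
  push_neg at hcon
  set S : ℝ := q' - B - q with hS
  have hSpos : 0 < S := by simp [hS]; linarith
  have hlam : (0:ℝ) < L / 4 := by linarith
  have h1 := strong_min (L / 4) hlam w x hw q hq (q' - B)
  have h2 := strong_min (L / 4) hlam w (x + ξ) hw q' hq' (q + B)
  have h3 : (∑ n, w n * |q + B - (x + ξ) n|) + ∑ n, w n * |q' - B - x n|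
      ≤ (∑ n, w n * |q - x n|) + ∑ n, w n * |q' - (x + ξ) n| := by
    rw [← Finset.sum_add_distrib, ← Finset.sum_add_distrib]
    apply Finset.sum_le_sum
    intro n _
    have key := key_abs (q - x n) (q' - x n) (ξ n) B (by linarith) (hB n)
    have e1 : q - x n + B - ξ n = q + B - (x + ξ) n := by
      simp only [Pi.add_apply]; ring_nf
    have e2 : q' - x n - B = q' - B - x n := by ring
    have e3 : q' - x n - ξ n = q' - (x + ξ) n := by
      simp only [Pi.add_apply]; ring_nf
    rw [e1, e2, e3] at key
    nlinarith [hw n, key, abs_nonneg (q + B - (x + ξ) n), abs_nonneg (q' - B - x n)]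
  unfold qrObj at h1 h2
  have hq1 : ((q' - B) - q) ^ 2 = S ^ 2 := by rw [hS]
  have hq2' : ((q + B) - q') ^ 2 = S ^ 2 := by rw [hS]; ring
  rw [hq1] at h1
  rw [hq2'] at h2
  have hA : (q' - B) ^ 2 / (2 * (L / 4)) + (q + B) ^ 2 / (2 * (L / 4))
      = q ^ 2 / (2 * (L / 4)) + q' ^ 2 / (2 * (L / 4)) - B * S / (L / 4) := by
    rw [hS]; field_simp; ring
  have hB2 : S ^ 2 / (4 * (L / 4)) + S ^ 2 / (4 * (L / 4)) = S ^ 2 / (2 * (L / 4)) := by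
    field_simp; ring
  have h5 : 0 < S ^ 2 / (2 * (L / 4)) := div_pos (by positivity) (by linarith)
  have h6 : 0 ≤ B * S / (L / 4) := by positivity
  linarith [h1, h2, h3, hA, hB2, h5, h6]

/-- BrMean is 2-Lipschitz (in the sup norm) with respect to the input scores:
with `q`, `q'` the quadratically regularized medians (parameter `L/4`) of
`x` and `x + ξ` respectively,
`|BrMean_L(w, x + ξ) − BrMean_L(w, x)| ≤ 2 ‖ξ‖∞`. -/
theorem brMean_lipschitz_scores (L : ℝ) (hL : 0 < L) {N : ℕ}
    (w x ξ : Fin N → ℝ) (hw : ∀ n, 0 ≤ w n) (hpos : 0 < ∑ n, w n)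
    (q q' : ℝ)
    (hq : ∀ z : ℝ, qrObj (L / 4) w x q ≤ qrObj (L / 4) w x z)
    (hq' : ∀ z : ℝ, qrObj (L / 4) w (x + ξ) q' ≤ qrObj (L / 4) w (x + ξ) z) :
    |clMean w (x + ξ) q' (L * (∑ n, w n) / 4) -
      clMean w x q (L * (∑ n, w n) / 4)| ≤ 2 * ‖ξ‖ := by
  set B : ℝ := ‖ξ‖ with hBdef
  have hB : ∀ n, |ξ n| ≤ B := by
    intro n
    simpa [Real.norm_eq_abs] using norm_le_pi_norm ξ n
  have hB0 : 0 ≤ B := norm_nonneg _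
  -- |q' - q| ≤ B
  have hqq1 : q' ≤ q + B := q_shift L hL w x ξ hw B hB hB0 q q' hq hq'
  have hqq2 : q ≤ q' + B := by
    have hx : x = (x + ξ) + (-ξ) := by ext n; simp
    have hBneg : ∀ n, |(-ξ) n| ≤ B := by intro n; simpa using hB n
    have hq2 : ∀ z : ℝ, qrObj (L / 4) w ((x + ξ) + (-ξ)) q ≤
        qrObj (L / 4) w ((x + ξ) + (-ξ)) z := by rw [← hx]; exact hq
    exact q_shift L hL w (x + ξ) (-ξ) hw B hBneg hB0 q' q hq' hq2
  have hqq : |q' - q| ≤ B := abs_le.mpr ⟨by linarith, by linarith⟩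
  set r : ℝ := L * (∑ n, w n) / 4 with hr
  set W : ℝ := ∑ n, w n with hW
  have hdiff : clMean w (x + ξ) q' r - clMean w x q r
      = (∑ n, w n * (clip ((x + ξ) n) q' r - clip (x n) q r)) / W := by
    unfold clMean
    rw [← hW, div_sub_div_same, ← Finset.sum_sub_distrib]
    congr 1
    apply Finset.sum_congr rfl
    intro n _
    ring
  rw [hdiff]
  rw [abs_div, abs_of_pos hpos]
  rw [div_le_iff₀ hpos]
  calc |∑ n, w n * (clip ((x + ξ) n) q' r - clip (x n) q r)|
      ≤ ∑ n, |w n * (clip ((x + ξ) n) q' r - clip (x n) q r)| :=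
        Finset.abs_sum_le_sum_abs _ _
    _ ≤ ∑ n, w n * (2 * B) := by
        apply Finset.sum_le_sum
        intro n _
        rw [abs_mul, abs_of_nonneg (hw n)]
        apply mul_le_mul_of_nonneg_left _ (hw n)
        calc |clip ((x + ξ) n) q' r - clip (x n) q r|
            ≤ |q' - q| + |(x + ξ) n - x n| := clip_lipschitz (x n) ((x + ξ) n) q q' r
          _ = |q' - q| + |ξ n| := by simp
          _ ≤ B + B := add_le_add hqq (hB n)
          _ = 2 * B := by ring
    _ = (∑ n, w n) * (2 * B) := by rw [Finset.sum_mul]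
    _ = 2 * B * W := by rw [hW]; ring
end
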